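/- arXiv:2109.13796 — 2 statements merged into one kernel-verified Lean document; each statement's English description precedes it below -/
import Mathlib

section
/- Let (L, L̃) be bivariate normal under P with means (μ₁, μ₂), standard deviations (σ₁, σ₂), correlation ρ, and suppose under Q the marginal of L̃ is N(μ₂ − σ₂κ, σ₂²) while the P-conditional law of L given L̃ = x is N(μ₁ + ρ(σ₁/σ₂)(x − μ₂), (1−ρ²)σ₁²). With π⁽²⁾[X|F⁽¹⁾] = E^P[X|F⁽¹⁾] + β√(Var^P[X|F⁽¹⁾]) and outer valuation E^Q, the two-step financial value of S = L equals Π⁽²⁾[S] = μ₁ − ρσ₁κ + βσ₁√(1−ρ²), and hence Π⁽²⁾[S] − Π⁽¹⁾[S] = σ₁[β(√(1−ρ²) − 1) − ρκ], where Π⁽¹⁾[S] = μ₁ + βσ₁. -/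
open MeasureTheory ProbabilityTheory
open scoped NNReal

lemma ProbabilityTheory.hasLaw_of_map_eq_gaussianReal {Ω : Type*} {mΩ : MeasurableSpace Ω}
    {P : Measure Ω} {X : Ω → ℝ} {m : ℝ} {v : ℝ≥0} (h : P.map X = gaussianReal m v) :
    HasLaw X (gaussianReal m v) P :=
  ⟨.of_map_ne_zero (by rw [h]; exact IsProbabilityMeasure.ne_zero _), h⟩

lemma ProbabilityTheory.integral_of_map_eq_gaussianReal {Ω : Type*} {mΩ : MeasurableSpace Ω}
    {P : Measure Ω} {X : Ω → ℝ} {m : ℝ} {v : ℝ≥0} (h : P.map X = gaussianReal m v) :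
    ∫ ω, X ω ∂P = m := by
  rw [(hasLaw_of_map_eq_gaussianReal h).integral_eq, integral_id_gaussianReal]

lemma MeasureTheory.integral_mul_add_const {Ω : Type*} {mΩ : MeasurableSpace Ω}
    {P : Measure Ω} [IsProbabilityMeasure P] {X : Ω → ℝ} (hX : Integrable X P) (a b : ℝ) :
    ∫ ω, a * X ω + b ∂P = a * ∫ ω, X ω ∂P + b := by
  rw [integral_add (hX.const_mul a) (integrable_const b), integral_const_mul, integral_const,
    probReal_univ, one_smul]

theorem stmt_11_general {Ω : Type*} {mΩ : MeasurableSpace Ω} (Q : Measure Ω)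
    [IsProbabilityMeasure Q]
    (Lt : Ω → ℝ) (μ₁ μ₂ σ₁ σ₂ ρ β κ : ℝ)
    (hσ₂ : 0 < σ₂)
    (hQlaw : Measure.map Lt Q = gaussianReal (μ₂ - σ₂ * κ) (Real.toNNReal (σ₂ ^ 2)))
    (hQint : Integrable Lt Q)
    (condval : Ω → ℝ)
    (hcond : condval = fun x => μ₁ + ρ * (σ₁ / σ₂) * (Lt x - μ₂)
      + β * σ₁ * Real.sqrt (1 - ρ ^ 2))
    (Pi1 Pi2 : ℝ) (hPi2 : Pi2 = ∫ x, condval x ∂Q) (hPi1 : Pi1 = μ₁ + β * σ₁) :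
    Pi2 = μ₁ - ρ * σ₁ * κ + β * σ₁ * Real.sqrt (1 - ρ ^ 2) ∧
    Pi2 - Pi1 = σ₁ * (β * (Real.sqrt (1 - ρ ^ 2) - 1) - ρ * κ) := by
  have hcond_affine : condval = fun x => ρ * (σ₁ / σ₂) * Lt x
      + (μ₁ - ρ * (σ₁ / σ₂) * μ₂ + β * σ₁ * Real.sqrt (1 - ρ ^ 2)) := by
    rw [hcond]; funext x; ring
  have hPi2_eq : Pi2 = μ₁ - ρ * σ₁ * κ + β * σ₁ * Real.sqrt (1 - ρ ^ 2) := by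
    rw [hPi2, hcond_affine, integral_mul_add_const hQint, integral_of_map_eq_gaussianReal hQlaw]
    field_simp
    ring
  exact ⟨hPi2_eq, by rw [hPi2_eq, hPi1]; ring⟩

/-- in the Gaussian longevity-bond example (L̃ ∼ N(μ₂ − σ₂κ, σ₂²) under `Q`,
conditional valuation `π⁽²⁾[L|F⁽¹⁾] = μ₁ + ρ(σ₁/σ₂)(L̃ − μ₂) + βσ₁√(1−ρ²)`), the two-step
financial value of `S = L` is `Pi2 = μ₁ − ρσ₁κ + βσ₁√(1−ρ²)` and its difference with the
two-step actuarial value `Pi1 = μ₁ + βσ₁` is `σ₁[β(√(1−ρ²) − 1) − ρκ]`. -/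
theorem stmt_11 {Ω : Type*} {mΩ : MeasurableSpace Ω} (P Q : Measure Ω)
    [IsProbabilityMeasure P] [IsProbabilityMeasure Q]
    (L Lt : Ω → ℝ) (μ₁ μ₂ σ₁ σ₂ ρ β κ : ℝ)
    (hσ₁ : 0 < σ₁) (hσ₂ : 0 < σ₂) (hβ : 0 ≤ β) (hρ : |ρ| ≤ 1) (hκ : 0 < κ)
    (hQlaw : Measure.map Lt Q = gaussianReal (μ₂ - σ₂ * κ) (Real.toNNReal (σ₂ ^ 2)))
    (hQint : Integrable Lt Q)
    (condval : Ω → ℝ)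
    (hcond : condval = fun x => μ₁ + ρ * (σ₁ / σ₂) * (Lt x - μ₂)
      + β * σ₁ * Real.sqrt (1 - ρ ^ 2))
    (Pi1 Pi2 : ℝ) (hPi2 : Pi2 = ∫ x, condval x ∂Q) (hPi1 : Pi1 = μ₁ + β * σ₁) :
    Pi2 = μ₁ - ρ * σ₁ * κ + β * σ₁ * Real.sqrt (1 - ρ ^ 2) ∧
    Pi2 - Pi1 = σ₁ * (β * (Real.sqrt (1 - ρ ^ 2) - 1) - ρ * κ) :=
  stmt_11_general (mΩ := mΩ) Q Lt μ₁ μ₂ σ₁ σ₂ ρ β κ hσ₂ hQlaw hQint condval hcond Pi1 Pi2 hPi2 hPi1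
end

section
/- In the binary equity-linked example, if Q[Y=200] − P[Y=200] = κ and Q[Y=200|I=1] − P[Y=200|I=1] = κ, then the two-step valuations satisfy Π⁽²⁾[S] − Π⁽¹⁾[S] = 100κ(p_I − p_{I|Y=200}) + 100κβ(√(p_I(1−p_I)) − √(p_{I|Y=200}(1−p_{I|Y=200}))) + 100β(p_{Y|I=1}√(p_I(1−p_I)) − p_Y√(p_{I|Y=200}(1−p_{I|Y=200}))), where p_Y = P[Y=200], p_{Y|I=1} = P[Y=200|I=1]. In particular if (Y,I) are independent under both P and Q then Π⁽¹⁾[S] = Π⁽²⁾[S]. -/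
/-!
Conditioning on `σ(p)` is computed fibre by fibre: a `σ(p)`-measurable function is constant on
the fibres of `p`, so at `ω` the conditional expectation is the mean, and the conditional
variance the variance, under `μ` conditioned on the fibre `p⁻¹{p ω}`. The claim
`S = 100 · 1{Y = I = 1}` lives on the fibre `{Y = 1}` (resp. `{I = 1}`), where it is a scaled
Bernoulli variable, so
`Π⁽¹⁾ = q_Y (100 p_{I|Y} + 100 β √(p_{I|Y}(1 - p_{I|Y})))` and
`Π⁽²⁾ = 100 q_{Y|I} (p_I + β √(p_I (1 - p_I)))`.
Substituting `q_Y = p_Y + κ`, `q_{Y|I} = p_{Y|I} + κ` and Bayes' identity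
`p_{I|Y} p_Y = p_{Y|I} p_I` gives the displayed difference.
-/

open MeasureTheory ProbabilityTheory

theorem integral_indicator_const_sub_integral_sq {Ω : Type*} [MeasurableSpace Ω]
    {ν : Measure Ω} [IsProbabilityMeasure ν] {A : Set Ω} (hA : MeasurableSet A) (c : ℝ) :
    ∫ x, (A.indicator (fun _ => c) x - ∫ y, A.indicator (fun _ => c) y ∂ν) ^ 2 ∂ν
      = c ^ 2 * (ν.real A * (1 - ν.real A)) := by
  have hsq : ∀ x, (A.indicator (fun _ => c) x - ν.real A * c) ^ 2
      = A.indicator (fun _ => c ^ 2 * (1 - 2 * ν.real A)) x + (ν.real A * c) ^ 2 := by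
    intro x
    by_cases hx : x ∈ A <;> simp only [hx, Set.indicator_of_mem, Set.indicator_of_notMem,
      not_false_eq_true] <;> ring
  rw [integral_indicator_const c hA, smul_eq_mul]
  simp_rw [hsq]
  rw [integral_add ((integrable_const _).indicator hA) (integrable_const _),
    integral_indicator_const _ hA, integral_const, probReal_univ, smul_eq_mul, smul_eq_mul]
  ring

section ConditioningOnAMap

variable {Ω α : Type*} [mΩ : MeasurableSpace Ω] {μ : Measure Ω}

theorem measure_preimage_singleton_apply_ne_zero (p : Ω → α) {ω : Ω} (hω : μ {ω} ≠ 0) :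
    μ (p ⁻¹' {p ω}) ≠ 0 :=
  fun h => hω (measure_mono_null (by simp) h)

variable {p : Ω → α}

theorem cond_real_apply {s : Set Ω} (hs : MeasurableSet s) (t : Set Ω) :
    μ[|s].real t = (μ.real s)⁻¹ * μ.real (s ∩ t) := by
  simp [Measure.real, cond_apply hs, ENNReal.toReal_mul, ENNReal.toReal_inv]

theorem condExp_comap_factorsThrough {f : Ω → ℝ} :
    (μ[f | MeasurableSpace.comap p ⊤]).FactorsThrough p :=
  stronglyMeasurable_condExp.factorsThrough (mY := ⊤)

variable [IsFiniteMeasure μ] {A : Set Ω}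

theorem condExp_comap_apply (hp : MeasurableSpace.comap p ⊤ ≤ mΩ) {f : Ω → ℝ}
    (hf : Integrable f μ) {ω : Ω} (hω : μ (p ⁻¹' {p ω}) ≠ 0) :
    μ[f | MeasurableSpace.comap p ⊤] ω = ∫ x, f x ∂μ[|p ⁻¹' {p ω}] := by
  set F := p ⁻¹' {p ω}
  have hFm : MeasurableSet[MeasurableSpace.comap p ⊤] F := ⟨{p ω}, trivial, rfl⟩
  have hF : μ.real F ≠ 0 := ENNReal.toReal_ne_zero.2 ⟨hω, measure_ne_top μ F⟩
  calc μ[f | MeasurableSpace.comap p ⊤] ω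
      = (μ.real F)⁻¹ * ∫ x in F, μ[f | MeasurableSpace.comap p ⊤] x ∂μ := by
        rw [setIntegral_congr_fun (hp F hFm) fun x hx => condExp_comap_factorsThrough hx,
          setIntegral_const, smul_eq_mul, inv_mul_cancel_left₀ hF]
    _ = (μ.real F)⁻¹ * ∫ x in F, f x ∂μ := by rw [setIntegral_condExp hp hf hFm]
    _ = ∫ x, f x ∂μ[|F] := by
        rw [ProbabilityTheory.cond, integral_smul_measure, ENNReal.toReal_inv, smul_eq_mul,
          Measure.real]

theorem condExp_sq_sub_condExp_comap_apply (hp : MeasurableSpace.comap p ⊤ ≤ mΩ) {f : Ω → ℝ}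
    (hf : MemLp f 2 μ) {ω : Ω} (hω : μ (p ⁻¹' {p ω}) ≠ 0) :
    μ[fun x => (f x - μ[f | MeasurableSpace.comap p ⊤] x) ^ 2 | MeasurableSpace.comap p ⊤] ω
      = ∫ x, (f x - ∫ y, f y ∂μ[|p ⁻¹' {p ω}]) ^ 2 ∂μ[|p ⁻¹' {p ω}] := by
  have hint : Integrable (fun x => (f x - μ[f | MeasurableSpace.comap p ⊤] x) ^ 2) μ :=
    (hf.sub (hf.condExp one_le_two)).integrable_sq
  rw [condExp_comap_apply hp hint hω, ← condExp_comap_apply hp (hf.integrable one_le_two) hω]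
  refine integral_congr_ae ((ae_cond_mem (hp _ ⟨_, trivial, rfl⟩)).mono fun x hx => ?_)
  simp only [condExp_comap_factorsThrough hx]

theorem condExp_comap_indicator_const_apply (hp : MeasurableSpace.comap p ⊤ ≤ mΩ)
    (hA : MeasurableSet A) (c : ℝ) {ω : Ω} (hω : μ (p ⁻¹' {p ω}) ≠ 0) :
    μ[A.indicator (fun _ => c) | MeasurableSpace.comap p ⊤] ω = μ[|p ⁻¹' {p ω}].real A * c := by
  rw [condExp_comap_apply hp ((integrable_const c).indicator hA) hω,
    integral_indicator_const c hA, smul_eq_mul]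

theorem condExp_sq_sub_condExp_comap_indicator_const_apply (hp : MeasurableSpace.comap p ⊤ ≤ mΩ)
    (hA : MeasurableSet A) (c : ℝ) {ω : Ω} (hω : μ (p ⁻¹' {p ω}) ≠ 0) :
    μ[fun x => (A.indicator (fun _ => c) x
        - μ[A.indicator (fun _ => c) | MeasurableSpace.comap p ⊤] x) ^ 2
      | MeasurableSpace.comap p ⊤] ω
      = c ^ 2 * (μ[|p ⁻¹' {p ω}].real A * (1 - μ[|p ⁻¹' {p ω}].real A)) := by
  have := cond_isProbabilityMeasure hω
  rw [condExp_sq_sub_condExp_comap_apply hp ((memLp_const c).indicator hA) hω,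
    integral_indicator_const_sub_integral_sq hA]

end ConditioningOnAMap

section BinaryConditioning

variable {Ω : Type*} [mΩ : MeasurableSpace Ω] {μ : Measure Ω} {p : Ω → Bool} {A : Set Ω}

theorem cond_real_preimage_apply_of_subset (hp : MeasurableSpace.comap p ⊤ ≤ mΩ)
    (hAp : A ⊆ p ⁻¹' {true}) (ω : Ω) :
    μ[|p ⁻¹' {p ω}].real A
      = (p ⁻¹' {true}).indicator (fun _ => μ.real A / μ.real (p ⁻¹' {true})) ω := by
  rw [cond_real_apply (hp _ ⟨_, trivial, rfl⟩)]
  rcases hω : p ω with _ | _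
  · have hempty : p ⁻¹' {false} ∩ A = ∅ :=
      Set.eq_empty_of_forall_notMem fun x hx =>
        absurd (hAp hx.2) (by simp [show p x = false from hx.1])
    simp [hω, hempty]
  · simp [hω, Set.inter_eq_right.2 hAp, inv_mul_eq_div]

variable [IsFiniteMeasure μ]

theorem condExp_comap_indicator_const_of_subset (hp : MeasurableSpace.comap p ⊤ ≤ mΩ)
    (hμ : ∀ ω, μ (p ⁻¹' {p ω}) ≠ 0) (hA : MeasurableSet A) (hAp : A ⊆ p ⁻¹' {true}) (c : ℝ) :
    μ[A.indicator (fun _ => c) | MeasurableSpace.comap p ⊤]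
      = (p ⁻¹' {true}).indicator (fun _ => μ.real A / μ.real (p ⁻¹' {true}) * c) := by
  funext ω
  rw [condExp_comap_indicator_const_apply hp hA c (hμ ω),
    cond_real_preimage_apply_of_subset hp hAp]
  by_cases hω : ω ∈ p ⁻¹' {true} <;> simp [hω]

theorem condExp_sq_sub_condExp_comap_indicator_const_of_subset
    (hp : MeasurableSpace.comap p ⊤ ≤ mΩ) (hμ : ∀ ω, μ (p ⁻¹' {p ω}) ≠ 0) (hA : MeasurableSet A)
    (hAp : A ⊆ p ⁻¹' {true}) (c : ℝ) :
    μ[fun x => (A.indicator (fun _ => c) x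
        - μ[A.indicator (fun _ => c) | MeasurableSpace.comap p ⊤] x) ^ 2
      | MeasurableSpace.comap p ⊤]
      = (p ⁻¹' {true}).indicator (fun _ => c ^ 2 * (μ.real A / μ.real (p ⁻¹' {true})
          * (1 - μ.real A / μ.real (p ⁻¹' {true})))) := by
  funext ω
  rw [condExp_sq_sub_condExp_comap_indicator_const_apply hp hA c (hμ ω),
    cond_real_preimage_apply_of_subset hp hAp]
  by_cases hω : ω ∈ p ⁻¹' {true} <;> simp [hω]

end BinaryConditioning

section TwoStepValuations

variable {Ω : Type*} [mΩ : MeasurableSpace Ω]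

noncomputable def twoStepFinancialValuation (P Q : Measure Ω) (m : MeasurableSpace Ω) (β : ℝ)
    (S : Ω → ℝ) : ℝ :=
  ∫ ω, (P[S|m] ω + β * √(P[fun ω' => (S ω' - P[S|m] ω') ^ 2|m] ω)) ∂Q

noncomputable def twoStepActuarialValuation (P Q : Measure Ω) (m : MeasurableSpace Ω) (β : ℝ)
    (S : Ω → ℝ) : ℝ :=
  (∫ ω, Q[S|m] ω ∂P) + β * √(∫ ω, (Q[S|m] ω - ∫ ω', Q[S|m] ω' ∂P) ^ 2 ∂P)

variable {P Q : Measure Ω} {p : Ω → Bool} {A : Set Ω} {c : ℝ}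

theorem twoStepFinancialValuation_indicator_const_of_subset [IsFiniteMeasure P]
    (hp : MeasurableSpace.comap p ⊤ ≤ mΩ) (hP : ∀ ω, P (p ⁻¹' {p ω}) ≠ 0)
    (hA : MeasurableSet A) (hAp : A ⊆ p ⁻¹' {true}) (hc : 0 ≤ c) (β : ℝ) :
    twoStepFinancialValuation P Q (MeasurableSpace.comap p ⊤) β (A.indicator fun _ => c)
      = Q.real (p ⁻¹' {true}) * (P.real A / P.real (p ⁻¹' {true}) * c
        + β * (c * √(P.real A / P.real (p ⁻¹' {true})
          * (1 - P.real A / P.real (p ⁻¹' {true}))))) := by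
  have hcomb (a b : ℝ) (ω : Ω) :
      (p ⁻¹' {true}).indicator (fun _ => a) ω + β * √((p ⁻¹' {true}).indicator (fun _ => b) ω)
        = (p ⁻¹' {true}).indicator (fun _ => a + β * √b) ω := by
    by_cases h : ω ∈ p ⁻¹' {true} <;> simp [h]
  rw [twoStepFinancialValuation,
    condExp_sq_sub_condExp_comap_indicator_const_of_subset hp hP hA hAp,
    condExp_comap_indicator_const_of_subset hp hP hA hAp]
  simp_rw [hcomb]
  rw [integral_indicator_const _ (hp _ ⟨_, trivial, rfl⟩), smul_eq_mul,
    Real.sqrt_mul (sq_nonneg c), Real.sqrt_sq hc]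

theorem twoStepActuarialValuation_indicator_const_of_subset [IsProbabilityMeasure P]
    [IsFiniteMeasure Q] (hp : MeasurableSpace.comap p ⊤ ≤ mΩ) (hQ : ∀ ω, Q (p ⁻¹' {p ω}) ≠ 0)
    (hA : MeasurableSet A) (hAp : A ⊆ p ⁻¹' {true}) (hc : 0 ≤ c) (β : ℝ) :
    twoStepActuarialValuation P Q (MeasurableSpace.comap p ⊤) β (A.indicator fun _ => c)
      = P.real (p ⁻¹' {true}) * (Q.real A / Q.real (p ⁻¹' {true}) * c)
        + β * (Q.real A / Q.real (p ⁻¹' {true}) * c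
          * √(P.real (p ⁻¹' {true}) * (1 - P.real (p ⁻¹' {true})))) := by
  have hF : MeasurableSet (p ⁻¹' {true}) := hp _ ⟨_, trivial, rfl⟩
  rw [twoStepActuarialValuation, condExp_comap_indicator_const_of_subset hp hQ hA hAp,
    integral_indicator_const_sub_integral_sq hF, integral_indicator_const _ hF, smul_eq_mul,
    Real.sqrt_mul (sq_nonneg _), Real.sqrt_sq (by positivity)]

end TwoStepValuations

theorem stmt_14_general (P Q : Measure (Bool × Bool)) [IsProbabilityMeasure P] [IsProbabilityMeasure Q]
    (hPpos : ∀ ω : Bool × Bool, P {ω} ≠ 0) (hQpos : ∀ ω : Bool × Bool, Q {ω} ≠ 0)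
    (β κ : ℝ)
    (S : Bool × Bool → ℝ)
    (hS : S = fun ω => if ω.1 then (if ω.2 then (100 : ℝ) else 0) else 0)
    (mY mI : MeasurableSpace (Bool × Bool))
    (hmY : mY = MeasurableSpace.comap Prod.fst ⊤)
    (hmI : mI = MeasurableSpace.comap Prod.snd ⊤)
    (qY pY pI pIY qYI pYI : ℝ)
    (hqY : qY = (Q {ω : Bool × Bool | ω.1 = true}).toReal)
    (hpY : pY = (P {ω : Bool × Bool | ω.1 = true}).toReal)
    (hpI : pI = (P {ω : Bool × Bool | ω.2 = true}).toReal)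
    (hpIY : pIY = (P {ω : Bool × Bool | ω.1 = true ∧ ω.2 = true}).toReal
      / (P {ω : Bool × Bool | ω.1 = true}).toReal)
    (hqYI : qYI = (Q {ω : Bool × Bool | ω.1 = true ∧ ω.2 = true}).toReal
      / (Q {ω : Bool × Bool | ω.2 = true}).toReal)
    (hpYI : pYI = (P {ω : Bool × Bool | ω.1 = true ∧ ω.2 = true}).toReal
      / (P {ω : Bool × Bool | ω.2 = true}).toReal)
    (hκ1 : qY = pY + κ) (hκ2 : qYI = pYI + κ)
    (Pi1 Pi2 : ℝ)
    (hPi1 : Pi1 = ∫ ω, ((P[S|mY]) ω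
      + β * Real.sqrt ((P[fun ω' => (S ω' - (P[S|mY]) ω') ^ 2|mY]) ω)) ∂Q)
    (hPi2 : Pi2 = (∫ ω, (Q[S|mI]) ω ∂P)
      + β * Real.sqrt (∫ ω, ((Q[S|mI]) ω - ∫ ω', (Q[S|mI]) ω' ∂P) ^ 2 ∂P)) :
    Pi2 - Pi1 = 100 * κ * (pI - pIY)
      + 100 * κ * β * (Real.sqrt (pI * (1 - pI)) - Real.sqrt (pIY * (1 - pIY)))
      + 100 * β * (pYI * Real.sqrt (pI * (1 - pI)) - pY * Real.sqrt (pIY * (1 - pIY))) ∧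
    (pIY = pI → pYI = pY → qYI = qY → Pi1 = Pi2) := by
  subst hmY hmI
  have hSA : S = {ω : Bool × Bool | ω.1 = true ∧ ω.2 = true}.indicator fun _ => 100 := by
    rw [hS]; funext ⟨a, b⟩; cases a <;> cases b <;> simp
  subst hSA
  have hP1 : Pi1 = qY * (pIY * 100 + β * (100 * √(pIY * (1 - pIY)))) := by
    rw [hqY, hpIY]
    exact hPi1.trans (twoStepFinancialValuation_indicator_const_of_subset (fun _ _ => .of_discrete)
      (fun ω => measure_preimage_singleton_apply_ne_zero _ (hPpos ω)) .of_discrete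
      (fun _ h => h.1) (by norm_num) β)
  have hP2 : Pi2 = pI * (qYI * 100) + β * (qYI * 100 * √(pI * (1 - pI))) := by
    rw [hpI, hqYI]
    exact hPi2.trans (twoStepActuarialValuation_indicator_const_of_subset (fun _ _ => .of_discrete)
      (fun ω => measure_preimage_singleton_apply_ne_zero _ (hQpos ω)) .of_discrete
      (fun _ h => h.2) (by norm_num) β)
  have hBayes : pIY * pY = pYI * pI := by
    have hY : (P {ω : Bool × Bool | ω.1 = true}).toReal ≠ 0 := ENNReal.toReal_ne_zero.2
      ⟨measure_preimage_singleton_apply_ne_zero Prod.fst (hPpos (true, true)), measure_ne_top _ _⟩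
    have hI : (P {ω : Bool × Bool | ω.2 = true}).toReal ≠ 0 := ENNReal.toReal_ne_zero.2
      ⟨measure_preimage_singleton_apply_ne_zero Prod.snd (hPpos (true, true)), measure_ne_top _ _⟩
    rw [hpIY, hpYI, hpY, hpI, div_mul_cancel₀ _ hY, div_mul_cancel₀ _ hI]
  refine ⟨?_, fun hIY _ hYI => by rw [hP1, hP2, hIY, hYI]; ring⟩
  rw [hP1, hP2]
  linear_combination (100 * pI + 100 * β * √(pI * (1 - pI))) * hκ2
    - (100 * pIY + 100 * β * √(pIY * (1 - pIY))) * hκ1 - 100 * hBayes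

/-- in the binary equity-linked example, if the risk premium `κ` satisfies
`q_Y = p_Y + κ` and `q_{Y|I=1} = p_{Y|I=1} + κ`, then the difference of the two-step
valuations is the displayed formula; in particular, under independence of `(Y, I)` under
both `P` and `Q`, the two valuations coincide. -/
theorem stmt_14 (P Q : Measure (Bool × Bool)) [IsProbabilityMeasure P] [IsProbabilityMeasure Q]
    (hPpos : ∀ ω : Bool × Bool, P {ω} ≠ 0) (hQpos : ∀ ω : Bool × Bool, Q {ω} ≠ 0)
    (β κ : ℝ) (hβ : 0 ≤ β)
    (S : Bool × Bool → ℝ)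
    (hS : S = fun ω => if ω.1 then (if ω.2 then (100 : ℝ) else 0) else 0)
    (mY mI : MeasurableSpace (Bool × Bool))
    (hmY : mY = MeasurableSpace.comap Prod.fst ⊤)
    (hmI : mI = MeasurableSpace.comap Prod.snd ⊤)
    (qY pY pI pIY qYI pYI : ℝ)
    (hqY : qY = (Q {ω : Bool × Bool | ω.1 = true}).toReal)
    (hpY : pY = (P {ω : Bool × Bool | ω.1 = true}).toReal)
    (hpI : pI = (P {ω : Bool × Bool | ω.2 = true}).toReal)
    (hpIY : pIY = (P {ω : Bool × Bool | ω.1 = true ∧ ω.2 = true}).toReal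
      / (P {ω : Bool × Bool | ω.1 = true}).toReal)
    (hqYI : qYI = (Q {ω : Bool × Bool | ω.1 = true ∧ ω.2 = true}).toReal
      / (Q {ω : Bool × Bool | ω.2 = true}).toReal)
    (hpYI : pYI = (P {ω : Bool × Bool | ω.1 = true ∧ ω.2 = true}).toReal
      / (P {ω : Bool × Bool | ω.2 = true}).toReal)
    (hκ1 : qY = pY + κ) (hκ2 : qYI = pYI + κ)
    (Pi1 Pi2 : ℝ)
    (hPi1 : Pi1 = ∫ ω, ((P[S|mY]) ω
      + β * Real.sqrt ((P[fun ω' => (S ω' - (P[S|mY]) ω') ^ 2|mY]) ω)) ∂Q)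
    (hPi2 : Pi2 = (∫ ω, (Q[S|mI]) ω ∂P)
      + β * Real.sqrt (∫ ω, ((Q[S|mI]) ω - ∫ ω', (Q[S|mI]) ω' ∂P) ^ 2 ∂P)) :
    Pi2 - Pi1 = 100 * κ * (pI - pIY)
      + 100 * κ * β * (Real.sqrt (pI * (1 - pI)) - Real.sqrt (pIY * (1 - pIY)))
      + 100 * β * (pYI * Real.sqrt (pI * (1 - pI)) - pY * Real.sqrt (pIY * (1 - pIY))) ∧
    (pIY = pI → pYI = pY → qYI = qY → Pi1 = Pi2) :=
  stmt_14_general P Q hPpos hQpos β κ S hS mY mI hmY hmI qY pY pI pIY qYI pYI hqY hpY hpI hpIY hqYI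
    hpYI hκ1 hκ2 Pi1 Pi2 hPi1 hPi2
end
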